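/- Let n ≥ 0, ξ ≥ 1, let f : {0,1}^n → {0,1} and junk : {0,1}^n → {0,1}^{n+ξ−1} be functions, and let U be a unitary operator on the state space of n+ξ qubits satisfying U(|x⟩ ⊗ |0^ξ⟩) = |junk(x)⟩ ⊗ |f(x)⟩ for every x ∈ {0,1}^n. Define V := (H^{⊗(n+ξ−1)} ⊗ X) U (H^{⊗n} ⊗ I^{⊗ξ}). Then |⟨0^{n+ξ}| V |0^{n+ξ}⟩|² = (#f)² / 2^{2n+ξ−1}. -/

import Mathlib

open scoped BigOperators

noncomputable section

/-- The classical states of `m` qubits: bit strings of length `m`. -/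
abbrev Qubits (m : ℕ) := Fin m → Bool

/-- The standard basis vector `|v⟩` of the `m`-qubit state space. -/
def ket {m : ℕ} (v : Qubits m) : Qubits m → ℂ := fun y => if y = v then 1 else 0

/-- Tensor product of operators, w.r.t. the identification
`{0,1}^a × {0,1}^b ≅ {0,1}^(a+b)`. -/
def tmul {a b : ℕ} (A : Matrix (Qubits a) (Qubits a) ℂ)
    (B : Matrix (Qubits b) (Qubits b) ℂ) :
    Matrix (Qubits (a + b)) (Qubits (a + b)) ℂ :=
  Matrix.of fun y y' =>
    A (fun i => y (Fin.castAdd b i)) (fun i => y' (Fin.castAdd b i)) *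
      B (fun i => y (Fin.natAdd a i)) (fun i => y' (Fin.natAdd a i))

/-- `n`-fold tensor power `M^{⊗n}` of a single-qubit operator. -/
def tpow (M : Matrix Bool Bool ℂ) (n : ℕ) : Matrix (Qubits n) (Qubits n) ℂ :=
  Matrix.of fun y y' => ∏ i, M (y i) (y' i)

/-- The Hadamard gate. -/
def Hmat : Matrix Bool Bool ℂ :=
  Matrix.of fun a b => ((1 / Real.sqrt 2 : ℝ) : ℂ) * (if a && b then -1 else 1)

/-- The Pauli `Z` gate. -/
def Zmat : Matrix Bool Bool ℂ :=
  Matrix.of fun a b => if a = b then (if a then -1 else 1) else 0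

/-- The Pauli `X` gate. -/
def Xmat : Matrix Bool Bool ℂ :=
  Matrix.of fun a b => if a = !b then 1 else 0

/-- Transport a matrix along an equality of qubit numbers. -/
def recast {a b : ℕ} (h : a = b) (M : Matrix (Qubits a) (Qubits a) ℂ) :
    Matrix (Qubits b) (Qubits b) ℂ :=
  Matrix.reindex (Equiv.arrowCongr (finCongr h) (Equiv.refl Bool))
    (Equiv.arrowCongr (finCongr h) (Equiv.refl Bool)) M

/-- Transport a bit string along an equality of lengths. -/
def vcast {a b : ℕ} (h : a = b) (x : Qubits a) : Qubits b := fun i => x (Fin.cast h.symm i)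

/-- `gap f = Σ_x (-1)^{f(x)}`. -/
def gap {α : Type*} [Fintype α] (f : α → Bool) : ℤ := ∑ x, if f x then -1 else 1

/-- `#f`, the number of inputs on which `f` outputs `1`. -/
def countOnes {α : Type*} [Fintype α] (f : α → Bool) : ℕ :=
  Finset.card (Finset.univ.filter fun x => f x = true)


/-- Auxiliary: append equivalence for qubit strings. -/
def appendEquiv (n ξ : ℕ) : (Qubits n × Qubits ξ) ≃ Qubits (n + ξ) where
  toFun p := Fin.append p.1 p.2
  invFun z := (fun i => z (Fin.castAdd ξ i), fun i => z (Fin.natAdd n i))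
  left_inv := by
    rintro ⟨x, w⟩
    simp [Fin.append_left, Fin.append_right]
  right_inv := by
    intro z
    funext i
    induction i using Fin.addCases with
    | left i => simp [Fin.append_left]
    | right i => simp [Fin.append_right]

lemma tpow_H_left (m : ℕ) (y : Qubits m) :
    tpow Hmat m (fun _ => false) y = ((1 / Real.sqrt 2 : ℝ) : ℂ) ^ m := by
  simp [tpow, Hmat]

lemma tpow_H_right (m : ℕ) (y : Qubits m) :
    tpow Hmat m y (fun _ => false) = ((1 / Real.sqrt 2 : ℝ) : ℂ) ^ m := by
  simp [tpow, Hmat]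

lemma tpow_one_zero (ξ : ℕ) (w : Qubits ξ) :
    tpow (1 : Matrix Bool Bool ℂ) ξ w (fun _ => false) =
      if w = (fun _ => false) then 1 else 0 := by
  simp only [tpow, Matrix.of_apply, Matrix.one_apply]
  by_cases h : w = fun _ => false
  · simp [h]
  · rw [if_neg h]
    obtain ⟨i, hi⟩ : ∃ i, w i ≠ false := by
      by_contra hc
      push_neg at hc
      exact h (funext hc)
    exact Finset.prod_eq_zero (Finset.mem_univ i) (by simp [hi])

/-- if the unitary `U` on `n+ξ` qubits satisfies
`U(|x⟩⊗|0^ξ⟩) = |junk(x)⟩⊗|f(x)⟩`, and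
`V := (H^{⊗(n+ξ−1)} ⊗ X) U (H^{⊗n} ⊗ I^{⊗ξ})`, then
`|⟨0^{n+ξ}|V|0^{n+ξ}⟩|² = (#f)² / 2^{2n+ξ−1}`. -/
theorem count_amplitude (n ξ : ℕ) (hξ : 1 ≤ ξ)
    (f : Qubits n → Bool) (junk : Qubits n → Qubits (n + ξ - 1))
    (U : Matrix (Qubits (n + ξ)) (Qubits (n + ξ)) ℂ)
    (hU : U ∈ Matrix.unitaryGroup (Qubits (n + ξ)) ℂ)
    (hact : ∀ x : Qubits n,
      U.mulVec (ket (Fin.append x fun _ : Fin ξ => false)) =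
        ket (vcast (show (n + ξ - 1) + 1 = n + ξ by omega) (Fin.snoc (junk x) (f x)))) :
    ‖((recast (show (n + ξ - 1) + 1 = n + ξ by omega)
              (tmul (tpow Hmat (n + ξ - 1)) (tpow Xmat 1)) *
            U * tmul (tpow Hmat n) (tpow 1 ξ))
          (fun _ => false) (fun _ => false))‖ ^ 2 =
      (countOnes f : ℝ) ^ 2 / 2 ^ (2 * n + ξ - 1) := by
  have h : (n + ξ - 1) + 1 = n + ξ := by omega
  set c : ℂ := ((1 / Real.sqrt 2 : ℝ) : ℂ) with hc
  have key : (recast h (tmul (tpow Hmat (n + ξ - 1)) (tpow Xmat 1)) * U *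
        tmul (tpow Hmat n) (tpow 1 ξ)) (fun _ => false) (fun _ => false) =
      c ^ (n + (n + ξ - 1)) * (countOnes f : ℂ) := by
    rw [Matrix.mul_apply]
    rw [← Equiv.sum_comp (appendEquiv n ξ)]
    rw [Fintype.sum_prod_type]
    have hB : ∀ (x : Qubits n) (w : Qubits ξ),
        (tmul (tpow Hmat n) (tpow 1 ξ)) (appendEquiv n ξ (x, w)) (fun _ => false) =
          c ^ n * (if w = (fun _ => false) then 1 else 0) := by
      intro x w
      simp only [tmul, Matrix.of_apply, appendEquiv, Equiv.coe_fn_mk,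
        Fin.append_left, Fin.append_right]
      rw [tpow_H_right, tpow_one_zero]
    have hcollapse : ∀ x : Qubits n,
        (∑ w : Qubits ξ,
          (recast h (tmul (tpow Hmat (n + ξ - 1)) (tpow Xmat 1)) * U) (fun _ => false)
              (appendEquiv n ξ (x, w)) *
            (tmul (tpow Hmat n) (tpow 1 ξ)) (appendEquiv n ξ (x, w)) (fun _ => false)) =
          (recast h (tmul (tpow Hmat (n + ξ - 1)) (tpow Xmat 1)) * U) (fun _ => false)
              (appendEquiv n ξ (x, fun _ => false)) * c ^ n := by
      intro x
      rw [Finset.sum_congr rfl (fun w _ => by rw [hB])]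
      simp only [mul_ite, mul_one, mul_zero, ← mul_assoc]
      rw [Finset.sum_ite_eq' Finset.univ (fun _ => false)
        (fun w => (recast h (tmul (tpow Hmat (n + ξ - 1)) (tpow Xmat 1)) * U) (fun _ => false)
              (appendEquiv n ξ (x, w)) * c ^ n)]
      simp
    rw [Finset.sum_congr rfl (fun x _ => hcollapse x)]
    have hAU : ∀ x : Qubits n,
        (recast h (tmul (tpow Hmat (n + ξ - 1)) (tpow Xmat 1)) * U) (fun _ => false)
            (appendEquiv n ξ (x, fun _ => false)) =
          c ^ (n + ξ - 1) * (if f x then 1 else 0) := by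
      intro x
      have hcol : ∀ y, U y (appendEquiv n ξ (x, fun _ => false)) =
          ket (vcast h (Fin.snoc (junk x) (f x))) y := by
        intro y
        have := congrFun (hact x) y
        rw [Matrix.mulVec, dotProduct] at this
        simp only [ket, mul_ite, mul_one, mul_zero] at this
        rw [Finset.sum_ite_eq' Finset.univ (Fin.append x fun _ : Fin ξ => false)
          (fun z => U y z)] at this
        simp only [Finset.mem_univ, if_true] at this
        simpa [appendEquiv, ket] using this
      rw [Matrix.mul_apply]
      rw [Finset.sum_congr rfl (fun y _ => by rw [hcol])]
      simp only [ket, mul_ite, mul_one, mul_zero]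
      rw [Finset.sum_ite_eq' Finset.univ (vcast h (Fin.snoc (junk x) (f x)))
        (fun y => recast h (tmul (tpow Hmat (n + ξ - 1)) (tpow Xmat 1)) (fun _ => false) y)]
      simp only [Finset.mem_univ, if_true]
      rw [recast, Matrix.reindex_apply, Matrix.submatrix_apply]
      have e1 : ((Equiv.arrowCongr (finCongr h) (Equiv.refl Bool)).symm
          (fun _ => false) : Qubits ((n + ξ - 1) + 1)) = fun _ => false := by
        funext i; rfl
      have e2 : ((Equiv.arrowCongr (finCongr h) (Equiv.refl Bool)).symm
          (vcast h (Fin.snoc (junk x) (f x))) : Qubits ((n + ξ - 1) + 1)) =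
          Fin.snoc (junk x) (f x) := by
        funext i
        simp [Equiv.arrowCongr, vcast, Fin.cast]
      rw [e1, e2]
      simp only [tmul, Matrix.of_apply]
      have e3 : (fun i : Fin (n + ξ - 1) =>
          (Fin.snoc (junk x) (f x) : Qubits ((n + ξ - 1) + 1)) (Fin.castAdd 1 i)) = junk x := by
        funext i
        rw [show Fin.castAdd 1 i = Fin.castSucc i from rfl, Fin.snoc_castSucc]
      have e4 : (fun i : Fin 1 =>
          (Fin.snoc (junk x) (f x) : Qubits ((n + ξ - 1) + 1)) (Fin.natAdd (n + ξ - 1) i)) = (fun _ => f x) := by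
        funext i
        have hi : Fin.natAdd (n + ξ - 1) i = Fin.last (n + ξ - 1) := by
          ext
          show (n + ξ - 1) + (i : ℕ) = (n + ξ - 1)
          have := i.isLt
          omega
        rw [hi, Fin.snoc_last]
      have e5 : tpow Xmat 1 (fun _ => false) (fun _ => f x) = (if f x then 1 else 0) := by
        simp only [tpow, Matrix.of_apply, Xmat]
        rw [Fin.prod_univ_one]
        cases f x <;> simp
      rw [e3, e4, tpow_H_left, e5, ← hc]
      split <;> ring
    rw [Finset.sum_congr rfl (fun x _ => by rw [hAU])]
    have hsum : (∑ x : Qubits n, c ^ (n + ξ - 1) * (if f x then (1:ℂ) else 0) * c ^ n) =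
        c ^ (n + (n + ξ - 1)) * ∑ x : Qubits n, (if f x then (1:ℂ) else 0) := by
      rw [Finset.mul_sum]
      refine Finset.sum_congr rfl fun x _ => ?_
      rw [pow_add]
      ring
    rw [hsum, Finset.sum_boole]
    rfl
  rw [key]
  have hnk : n + (n + ξ - 1) = 2 * n + ξ - 1 := by omega
  rw [norm_mul, norm_pow, mul_pow, ← hnk]
  have hcabs : ‖c‖ = (1 / Real.sqrt 2 : ℝ) := by
    rw [hc, Complex.norm_real, Real.norm_eq_abs, abs_of_nonneg (by positivity)]
  rw [hcabs, Complex.norm_natCast]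
  have h2 : ((1 / Real.sqrt 2 : ℝ)) ^ 2 = 1 / 2 := by
    rw [div_pow, one_pow, Real.sq_sqrt (by norm_num : (0:ℝ) ≤ 2)]
  have h3 : ((1 / Real.sqrt 2 : ℝ) ^ (n + (n + ξ - 1))) ^ 2 =
      (1 / 2 : ℝ) ^ (n + (n + ξ - 1)) := by
    rw [← pow_mul, mul_comm, pow_mul, h2]
  rw [h3]
  rw [div_pow, one_pow]
  ring
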